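/- For every n ≥ 2, 2·∑_{i=2}^n ∑_{ℓ=0}^{i−1} ℓ·(n−i+1)·(i−1)!·(n−ℓ−1)!/(i−1−ℓ)! = n!·(2(n+1)H_n − 4n), where H_n = ∑_{i=1}^n 1/i is the nth harmonic number. -/

import Mathlib

open Finset

/-- The `n`th harmonic number. -/
noncomputable def H (n : ℕ) : ℝ := ∑ i ∈ Finset.Icc 1 n, (1 : ℝ) / i

-- telescoping inner sum: for m+1 ≤ n,
-- ∑_{ℓ=0}^m ℓ m! (n-ℓ-1)!/(m-ℓ)! = m n! / ((n-m)(n-m+1))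
lemma cf_inner_sum (n m : ℕ) (hm : m + 1 ≤ n) :
    ∑ ℓ ∈ Finset.range (m+1),
        (ℓ : ℝ) * (Nat.factorial m : ℝ) * (Nat.factorial (n - ℓ - 1) : ℝ)
          / (Nat.factorial (m - ℓ) : ℝ)
      = (m : ℝ) * (Nat.factorial n : ℝ) / (((n:ℝ) - m) * ((n:ℝ) - m + 1)) := by
  have hnm : (0:ℝ) < (n:ℝ) - m := by
    have : (m:ℝ) + 1 ≤ n := by exact_mod_cast hm
    linarith
  set f : ℕ → ℝ := fun ℓ => if ℓ ≤ m then
      ((ℓ:ℝ) * ((n:ℝ) - m) + m) * (Nat.factorial m : ℝ) * (Nat.factorial (n - ℓ) : ℝ)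
        / (Nat.factorial (m - ℓ) : ℝ) else 0 with hf
  have key : ∀ ℓ ∈ Finset.range (m+1),
      (ℓ : ℝ) * (Nat.factorial m : ℝ) * (Nat.factorial (n - ℓ - 1) : ℝ)
          / (Nat.factorial (m - ℓ) : ℝ)
        = (f ℓ - f (ℓ+1)) / (((n:ℝ) - m) * ((n:ℝ) - m + 1)) := by
    intro ℓ hℓ
    rw [Finset.mem_range] at hℓ
    have hℓm : ℓ ≤ m := Nat.lt_succ_iff.mp hℓ
    have hnl : (Nat.factorial (n - ℓ) : ℝ)
        = ((n:ℝ) - ℓ) * (Nat.factorial (n - ℓ - 1) : ℝ) := by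
      have h1 : n - ℓ = (n - ℓ - 1) + 1 := by omega
      rw [h1, Nat.factorial_succ]
      have h2 : ((n - ℓ - 1 : ℕ) : ℝ) + 1 = (n:ℝ) - ℓ := by
        have : ((n - ℓ - 1 : ℕ) : ℝ) = (n:ℝ) - ℓ - 1 := by
          push_cast [Nat.cast_sub (by omega : ℓ + 1 ≤ n)]
          have : ((n - ℓ - 1 : ℕ) : ℝ) = ((n - (ℓ+1) : ℕ) : ℝ) := by congr 1
          rw [this, Nat.cast_sub (by omega : ℓ + 1 ≤ n)]
          push_cast; ring
        rw [this]; ring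
      push_cast
      rw [h2]
    rcases eq_or_lt_of_le hℓm with rfl | hlt
    · -- ℓ = m
      have : f ℓ = ((ℓ:ℝ) * ((n:ℝ) - ℓ) + ℓ) * (Nat.factorial ℓ : ℝ) * (Nat.factorial (n - ℓ) : ℝ) := by
        simp [hf, Nat.sub_self]
      rw [this]
      have : f (ℓ+1) = 0 := by simp [hf]
      rw [this, Nat.sub_self]
      rw [hnl]
      simp only [Nat.factorial_zero, Nat.cast_one, div_one]
      field_simp
      ring
    · -- ℓ < m
      have hml : (Nat.factorial (m - ℓ) : ℝ)
          = ((m:ℝ) - ℓ) * (Nat.factorial (m - ℓ - 1) : ℝ) := by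
        have h1 : m - ℓ = (m - ℓ - 1) + 1 := by omega
        rw [h1, Nat.factorial_succ]
        have h2 : ((m - ℓ - 1 : ℕ) : ℝ) + 1 = (m:ℝ) - ℓ := by
          have : ((m - ℓ - 1 : ℕ) : ℝ) = ((m - (ℓ+1) : ℕ) : ℝ) := by congr 1
          rw [this, Nat.cast_sub (by omega : ℓ + 1 ≤ m)]
          push_cast; ring
        push_cast
        rw [h2]
      have e1 : f ℓ = ((ℓ:ℝ) * ((n:ℝ) - m) + m) * (Nat.factorial m : ℝ) * (Nat.factorial (n - ℓ) : ℝ)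
          / (Nat.factorial (m - ℓ) : ℝ) := by simp [hf, hℓm]
      have e2 : f (ℓ+1) = (((ℓ:ℝ)+1) * ((n:ℝ) - m) + m) * (Nat.factorial m : ℝ) * (Nat.factorial (n - ℓ - 1) : ℝ)
          / (Nat.factorial (m - ℓ - 1) : ℝ) := by
        have h3 : (ℓ+1 : ℕ) ≤ m := hlt
        have h4 : n - (ℓ+1) = n - ℓ - 1 := by omega
        have h5 : m - (ℓ+1) = m - ℓ - 1 := by omega
        simp [hf, h3, h4, h5]
      rw [e1, e2, hnl, hml]
      have hml' : (0:ℝ) < (m:ℝ) - ℓ := by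
        have : (ℓ:ℝ) + 1 ≤ m := by exact_mod_cast hlt
        linarith
      have hfac1 : (Nat.factorial (m - ℓ - 1) : ℝ) ≠ 0 := by positivity
      field_simp
      ring
  rw [Finset.sum_congr rfl key, ← Finset.sum_div, Finset.sum_range_sub' f]
  have e0 : f 0 = (m:ℝ) * (Nat.factorial n : ℝ) := by
    simp [hf]
    field_simp
  have em : f (m+1) = 0 := by simp [hf]
  rw [e0, em, sub_zero]

lemma cf_inner_sum' (n i : ℕ) (h1 : 1 ≤ i) (hn : i ≤ n) :
    ∑ ℓ ∈ Finset.range i,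
        (ℓ : ℝ) * ((n - i + 1 : ℕ) : ℝ) * (Nat.factorial (i - 1) : ℝ)
          * (Nat.factorial (n - ℓ - 1) : ℝ) / (Nat.factorial (i - 1 - ℓ) : ℝ)
      = ((i:ℝ) - 1) * (Nat.factorial n : ℝ) / ((n:ℝ) - i + 2) := by
  obtain ⟨m, rfl⟩ : ∃ m, i = m + 1 := ⟨i - 1, by omega⟩
  simp only [Nat.add_sub_cancel]
  have hm : m + 1 ≤ n := hn
  have key := cf_inner_sum n m hm
  have hcast : ((n - (m+1) + 1 : ℕ) : ℝ) = (n:ℝ) - m := by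
    have h : n - (m+1) + 1 = n - m := by omega
    rw [h, Nat.cast_sub (by omega)]
  have hnm : (0:ℝ) < (n:ℝ) - m := by
    have : (m:ℝ) + 1 ≤ n := by exact_mod_cast hm
    linarith
  calc ∑ ℓ ∈ Finset.range (m+1),
        (ℓ : ℝ) * ((n - (m+1) + 1 : ℕ) : ℝ) * (Nat.factorial m : ℝ)
          * (Nat.factorial (n - ℓ - 1) : ℝ) / (Nat.factorial (m - ℓ) : ℝ)
      = ((n:ℝ) - m) * ∑ ℓ ∈ Finset.range (m+1),
        (ℓ : ℝ) * (Nat.factorial m : ℝ)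
          * (Nat.factorial (n - ℓ - 1) : ℝ) / (Nat.factorial (m - ℓ) : ℝ) := by
        rw [Finset.mul_sum]
        refine Finset.sum_congr rfl fun ℓ _ => ?_
        rw [hcast]; ring
    _ = ((n:ℝ) - m) * ((m:ℝ) * (Nat.factorial n : ℝ) / (((n:ℝ) - m) * ((n:ℝ) - m + 1))) := by
        rw [key]
    _ = (((m+1:ℕ):ℝ) - 1) * (Nat.factorial n : ℝ) / ((n:ℝ) - ((m+1:ℕ):ℝ) + 2) := by
        have h3 : (n:ℝ) - m ≠ 0 := ne_of_gt hnm
        have h4 : (n:ℝ) - m + 1 ≠ 0 := by linarith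
        have h5 : (n:ℝ) - (↑m + 1) + 2 = (n:ℝ) - m + 1 := by push_cast; ring
        push_cast
        push_cast
        rw [h5]
        field_simp
        ring


/-- For every `n ≥ 2`,
`2 ∑_{i=2}^n ∑_{ℓ=0}^{i-1} ℓ (n-i+1) (i-1)! (n-ℓ-1)! / (i-1-ℓ)! = n!(2(n+1)Hₙ - 4n)`. -/
theorem closed_form_eq_quicksort (n : ℕ) (hn : 2 ≤ n) :
    2 * ∑ i ∈ Finset.Icc 2 n, ∑ ℓ ∈ Finset.range i,
        (ℓ : ℝ) * ((n - i + 1 : ℕ) : ℝ) * (Nat.factorial (i - 1) : ℝ)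
          * (Nat.factorial (n - ℓ - 1) : ℝ) / (Nat.factorial (i - 1 - ℓ) : ℝ)
      = (Nat.factorial n : ℝ) * (2 * ((n : ℝ) + 1) * H n - 4 * n) := by
  have step1 : ∀ i ∈ Finset.Icc 2 n, ∑ ℓ ∈ Finset.range i,
        (ℓ : ℝ) * ((n - i + 1 : ℕ) : ℝ) * (Nat.factorial (i - 1) : ℝ)
          * (Nat.factorial (n - ℓ - 1) : ℝ) / (Nat.factorial (i - 1 - ℓ) : ℝ)
      = (Nat.factorial n : ℝ) * ((n:ℝ)+1) * (1/((n:ℝ) - i + 2)) - (Nat.factorial n : ℝ) := by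
    intro i hi
    rw [Finset.mem_Icc] at hi
    rw [cf_inner_sum' n i (by omega) hi.2]
    have hpos : (0:ℝ) < (n:ℝ) - i + 2 := by
      have : (i:ℝ) ≤ n := by exact_mod_cast hi.2
      linarith
    field_simp
    ring
  rw [Finset.sum_congr rfl step1, Finset.sum_sub_distrib, Finset.sum_const,
    Nat.card_Icc]
  have refl1 : ∑ i ∈ Finset.Icc 2 n, (1:ℝ)/((n:ℝ) - i + 2)
      = ∑ i ∈ Finset.Icc 2 n, (1:ℝ)/i := by
    refine Finset.sum_nbij' (fun i => n + 2 - i) (fun i => n + 2 - i) ?_ ?_ ?_ ?_ ?_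
    · intro a ha; rw [Finset.mem_Icc] at ha ⊢; show 2 ≤ n + 2 - a ∧ n + 2 - a ≤ n; omega
    · intro a ha; rw [Finset.mem_Icc] at ha ⊢; show 2 ≤ n + 2 - a ∧ n + 2 - a ≤ n; omega
    · intro a ha; rw [Finset.mem_Icc] at ha; show n + 2 - (n + 2 - a) = a; omega
    · intro a ha; rw [Finset.mem_Icc] at ha; show n + 2 - (n + 2 - a) = a; omega
    · intro a ha
      rw [Finset.mem_Icc] at ha
      have : ((n + 2 - a : ℕ) : ℝ) = (n:ℝ) + 2 - a := by
        rw [Nat.cast_sub (by omega)]; push_cast; ring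
      rw [this]
      ring_nf
  have hH : H n = 1 + ∑ i ∈ Finset.Icc 2 n, (1:ℝ)/i := by
    have h : Finset.Icc 1 n = insert 1 (Finset.Icc 2 n) := by
      ext x; simp only [Finset.mem_Icc, Finset.mem_insert]; omega
    rw [H, h, Finset.sum_insert (by simp)]
    norm_num
  rw [← Finset.mul_sum, refl1, hH]
  have hc : ((n + 1 - 2 : ℕ) : ℝ) = (n:ℝ) - 1 := by
    rw [Nat.cast_sub (by omega)]; push_cast; ring
  rw [nsmul_eq_mul, hc]
  ring
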